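/- arXiv:2207.09340 — 3 statements merged into one kernel-verified Lean document; each statement's English description precedes it below -/
import Mathlib

section
/- Let n ≥ k ≥ 1 and let F ∈ ℂ^{n×n} be the discrete Fourier transform matrix, F_{jl} = (1/√n)·exp(2πi(j−1)(l−1)/n). Let T ⊆ ℂ^n be the span of the first k columns of F. Then sup{ ‖v‖_∞ : v ∈ T, ‖v‖₂ = 1 } = √(k/n); in particular the lower bound √(k/n) on the coherence of k-dimensional subspaces with respect to ‖·‖_I is attained. -/
/-!
The first `k` columns `u₀, …, u_{k-1}` of the DFT matrix are orthonormal (their inner products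
are geometric sums of an `n`-th root of unity), and every entry has modulus `1 / √n`. Writing
`v = ∑ cₗ uₗ`, Cauchy–Schwarz gives `|v j| ≤ (∑ₗ |uₗ j|²)^{1/2} ‖c‖₂ = √(k/n) ‖v‖₂`, with equality
for `cₗ = conj (uₗ j)`.
-/

/-- The Euclidean (ℓ²) norm of a finite complex vector. -/
noncomputable def l2C {n : ℕ} (x : Fin n → ℂ) : ℝ := Real.sqrt (∑ i, ‖x i‖ ^ 2)

/-- The ℓ^∞ norm of a finite complex vector. -/
noncomputable def linfC {n : ℕ} (x : Fin n → ℂ) : ℝ := ⨆ i, ‖x i‖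

/-- The discrete Fourier transform matrix `F_{jl} = n^{-1/2} exp(2πi·j·l/n)`
(0-based indices, equivalent to the 1-based `(j−1)(l−1)` convention). -/
noncomputable def dftMatrix (n : ℕ) : Matrix (Fin n) (Fin n) ℂ :=
  fun j l => ((1 / Real.sqrt n : ℝ) : ℂ) *
    Complex.exp (2 * (Real.pi : ℂ) * Complex.I * (j.val : ℂ) * (l.val : ℂ) / (n : ℂ))

open Real Complex Submodule Set
open scoped ComplexConjugate

section Orthonormal

variable {𝕜 ι E : Type*} [RCLike 𝕜] [Fintype ι] [NormedAddCommGroup E] [InnerProductSpace 𝕜 E]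

theorem Orthonormal.norm_sum_smul {u : ι → E} (hu : Orthonormal 𝕜 u) (c : ι → 𝕜) :
    ‖∑ i, c i • u i‖ = √(∑ i, ‖c i‖ ^ 2) := by
  rw [eq_comm, Real.sqrt_eq_iff_eq_sq (by positivity) (norm_nonneg _)]
  apply RCLike.ofReal_injective (K := 𝕜)
  push_cast
  rw [← inner_self_eq_norm_sq_to_K, hu.inner_sum]
  simp [RCLike.conj_mul]

end Orthonormal

section Coherence

variable {𝕜 ι m : Type*} [RCLike 𝕜] [Fintype ι] [Fintype m] {u : ι → EuclideanSpace 𝕜 m}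

theorem Orthonormal.norm_apply_le_of_mem_span (hu : Orthonormal 𝕜 u) {x : EuclideanSpace 𝕜 m}
    (hx : x ∈ span 𝕜 (range u)) (j : m) : ‖x j‖ ≤ √(∑ i, ‖u i j‖ ^ 2) * ‖x‖ := by
  obtain ⟨c, rfl⟩ := (mem_span_range_iff_exists_fun 𝕜).1 hx
  calc ‖(∑ i, c i • u i) j‖ = ‖∑ i, c i * u i j‖ := by simp
    _ ≤ ∑ i, ‖u i j‖ * ‖c i‖ := by
      simpa only [norm_mul, mul_comm] using norm_sum_le Finset.univ fun i => c i * u i j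
    _ ≤ √(∑ i, ‖u i j‖ ^ 2) * √(∑ i, ‖c i‖ ^ 2) := Real.sum_mul_le_sqrt_mul_sqrt _ _ _
    _ = √(∑ i, ‖u i j‖ ^ 2) * ‖∑ i, c i • u i‖ := by rw [hu.norm_sum_smul]

theorem Orthonormal.exists_mem_span_norm_eq_one_norm_apply_eq (hu : Orthonormal 𝕜 u) (j : m)
    (hj : ∑ i, ‖u i j‖ ^ 2 ≠ 0) :
    ∃ x ∈ span 𝕜 (range u), ‖x‖ = 1 ∧ ‖x j‖ = √(∑ i, ‖u i j‖ ^ 2) := by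
  set s := √(∑ i, ‖u i j‖ ^ 2)
  have hs : 0 < s := Real.sqrt_pos.2 (lt_of_le_of_ne (by positivity) hj.symm)
  set y := ∑ i, (starRingEnd 𝕜) (u i j) • u i
  have hy : ‖y‖ = s := by simp only [y, s, hu.norm_sum_smul, RCLike.norm_conj]
  have hyj : y j = (s ^ 2 : ℝ) := by
    simp [y, s, RCLike.conj_mul, Real.sq_sqrt (by positivity : (0:ℝ) ≤ ∑ i, ‖u i j‖ ^ 2)]
  refine ⟨(s⁻¹ : 𝕜) • y, smul_mem _ _ (sum_mem fun i _ => smul_mem _ _ (subset_span ⟨i, rfl⟩)),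
    ?_, ?_⟩
  · rw [norm_smul, hy, norm_inv, RCLike.norm_ofReal, abs_of_pos hs, inv_mul_cancel₀ hs.ne']
  · rw [PiLp.smul_apply, hyj, smul_eq_mul, norm_mul, norm_inv, RCLike.norm_ofReal,
      RCLike.norm_ofReal, abs_of_pos hs, abs_of_pos (by positivity)]
    field_simp

end Coherence

theorem dftMatrix_eq_pow (n : ℕ) (j l : Fin n) :
    dftMatrix n j l = ((1 / √n : ℝ) : ℂ) * exp (2 * π * I / n) ^ (j * l : ℕ) := by
  rw [dftMatrix, ← Complex.exp_nat_mul]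
  push_cast
  ring_nf

theorem norm_dftMatrix (n : ℕ) (j l : Fin n) : ‖dftMatrix n j l‖ = 1 / √n := by
  rw [dftMatrix_eq_pow, norm_mul, norm_pow, (isPrimitiveRoot_exp n j.pos.ne').norm'_eq_one
    j.pos.ne', one_pow, mul_one, norm_real, Real.norm_of_nonneg (by positivity)]

noncomputable def dftColumn (n : ℕ) (l : Fin n) : EuclideanSpace ℂ (Fin n) :=
  WithLp.toLp 2 fun j => dftMatrix n j l

theorem inner_dftColumn (n : ℕ) (a b : Fin n) :
    inner ℂ (dftColumn n a) (dftColumn n b) = if a = b then 1 else 0 := by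
  have hn : n ≠ 0 := a.pos.ne'
  set ζ := exp (2 * π * I / n)
  have hζ : IsPrimitiveRoot ζ n := isPrimitiveRoot_exp n hn
  have hζ_conj : ζ * conj ζ = 1 := by
    rw [mul_conj, normSq_eq_norm_sq, hζ.norm'_eq_one hn]; simp
  set ω := ζ ^ (b : ℕ) * conj ζ ^ (a : ℕ)
  have hterm (j : Fin n) : dftMatrix n j b * conj (dftMatrix n j a) = ω ^ (j : ℕ) / n := by
    have hsq : ((1 / √n : ℝ) : ℂ) * ((1 / √n : ℝ) : ℂ) = 1 / n := by
      rw [← ofReal_mul, div_mul_div_comm, one_mul, Real.mul_self_sqrt (Nat.cast_nonneg n)]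
      push_cast; ring
    simp only [dftMatrix_eq_pow, map_mul, conj_ofReal, map_pow, ω]
    rw [mul_mul_mul_comm, hsq]
    ring
  have hsum : inner ℂ (dftColumn n a) (dftColumn n b) = (∑ j ∈ Finset.range n, ω ^ j) / n := by
    simp only [dftColumn, PiLp.inner_apply, RCLike.inner_apply, hterm, ← Finset.sum_div]
    exact congrArg (· / (n : ℂ)) (Fin.sum_univ_eq_sum_range (ω ^ ·) n)
  rw [hsum]
  split_ifs with hab
  · subst hab
    simp [ω, ← mul_pow, hζ_conj, hn]
  · have hω : ω ≠ 1 := by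
      intro h
      have : ζ ^ (b : ℕ) = ζ ^ (a : ℕ) := by
        simpa [ω, mul_assoc, ← mul_pow, mul_comm (conj ζ), hζ_conj] using
          congrArg (· * ζ ^ (a : ℕ)) h
      exact hab (Fin.ext (hζ.pow_inj b.isLt a.isLt this).symm)
    have hωn : ω ^ n = 1 := by
      rw [mul_pow, ← pow_mul, ← pow_mul, mul_comm _ n, mul_comm _ n, pow_mul, pow_mul, ← map_pow,
        hζ.pow_eq_one, map_one, one_pow, one_pow, one_mul]
    rw [geom_sum_eq hω, hωn, sub_self, zero_div, zero_div]

theorem orthonormal_dftColumn (n : ℕ) : Orthonormal ℂ (dftColumn n) :=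
  orthonormal_iff_ite.2 (inner_dftColumn n)

theorem l2C_eq_norm_toLp {n : ℕ} (v : Fin n → ℂ) : l2C v = ‖WithLp.toLp 2 v‖ := by
  rw [l2C, EuclideanSpace.norm_eq]

theorem norm_le_linfC {n : ℕ} (v : Fin n → ℂ) (j : Fin n) : ‖v j‖ ≤ linfC v :=
  le_ciSup (f := fun i => ‖v i‖) (Finite.bddAbove_range _) j

theorem mem_span_dftMatrix_cols_iff {n k : ℕ} (hkn : k ≤ n) (v : Fin n → ℂ) :
    v ∈ span ℂ {v : Fin n → ℂ | ∃ l : Fin n, (l : ℕ) < k ∧ v = fun j => dftMatrix n j l} ↔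
      WithLp.toLp 2 v ∈ span ℂ (range fun l : Fin k => dftColumn n (Fin.castLE hkn l)) := by
  have hcols : {v : Fin n → ℂ | ∃ l : Fin n, (l : ℕ) < k ∧ v = fun j => dftMatrix n j l} =
      WithLp.linearEquiv 2 ℂ (Fin n → ℂ) ''
        range fun l : Fin k => dftColumn n (Fin.castLE hkn l) := by
    ext v
    constructor
    · rintro ⟨l, hl, rfl⟩
      exact ⟨_, ⟨⟨l, hl⟩, rfl⟩, rfl⟩
    · rintro ⟨_, ⟨l, rfl⟩, rfl⟩
      exact ⟨Fin.castLE hkn l, l.isLt, rfl⟩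
  rw [hcols, span_image_linearEquiv, mem_map_equiv]
  rfl

theorem sum_norm_dftColumn_sq {n k : ℕ} (hkn : k ≤ n) (j : Fin n) :
    ∑ l : Fin k, ‖dftColumn n (Fin.castLE hkn l) j‖ ^ 2 = k / n := by
  simp only [dftColumn, PiLp.toLp_apply, norm_dftMatrix, Finset.sum_const, Finset.card_univ,
    Fintype.card_fin, nsmul_eq_mul, div_pow, one_pow, Real.sq_sqrt (Nat.cast_nonneg n)]
  ring

/-- the span `T` of the first `k` columns of the DFT matrix satisfies
`sup { ‖v‖_∞ : v ∈ T, ‖v‖₂ = 1 } = √(k/n)`; in particular the coherence lower bound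
`√(k/n)` for `k`-dimensional subspaces (w.r.t. `‖·‖_I`) is attained. -/
theorem dft_span_coherence_attained (n k : ℕ) (hk : 1 ≤ k) (hkn : k ≤ n)
    (T : Submodule ℂ (Fin n → ℂ))
    (hT : T = Submodule.span ℂ
      {v : Fin n → ℂ | ∃ l : Fin n, (l : ℕ) < k ∧ v = fun j => dftMatrix n j l}) :
    (⨆ v : {v : Fin n → ℂ // v ∈ T ∧ l2C v = 1}, linfC v.1) = Real.sqrt ((k : ℝ) / n) := by
  set u : Fin k → EuclideanSpace ℂ (Fin n) := fun l => dftColumn n (Fin.castLE hkn l)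
  have hu : Orthonormal ℂ u := (orthonormal_dftColumn n).comp _ (Fin.castLE_injective hkn)
  have hmem (v : Fin n → ℂ) : v ∈ T ↔ WithLp.toLp 2 v ∈ span ℂ (range u) := by
    rw [hT, mem_span_dftMatrix_cols_iff hkn]
  have hle (v : Fin n → ℂ) (hv : v ∈ T) (hv1 : l2C v = 1) : linfC v ≤ √(k / n) := by
    refine Real.iSup_le (fun j => ?_) (Real.sqrt_nonneg _)
    simpa [u, sum_norm_dftColumn_sq, ← l2C_eq_norm_toLp, hv1] using
      hu.norm_apply_le_of_mem_span ((hmem v).1 hv) j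
  have hkn_pos : (0 : ℝ) < k / n := div_pos (by exact_mod_cast hk) (by exact_mod_cast hk.trans hkn)
  set j₀ : Fin n := ⟨0, hk.trans hkn⟩
  obtain ⟨x, hxu, hx1, hxj₀⟩ := hu.exists_mem_span_norm_eq_one_norm_apply_eq j₀
    (by rw [sum_norm_dftColumn_sq]; exact hkn_pos.ne')
  have hxT : x.ofLp ∈ T ∧ l2C x.ofLp = 1 := ⟨(hmem _).2 hxu, by rwa [l2C_eq_norm_toLp]⟩
  have : Nonempty {v : Fin n → ℂ // v ∈ T ∧ l2C v = 1} := ⟨⟨x.ofLp, hxT⟩⟩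
  refine ciSup_eq_of_forall_le_of_forall_lt_exists_gt (fun v => hle v.1 v.2.1 v.2.2)
    fun w hw => ⟨⟨x.ofLp, hxT⟩, hw.trans_le ?_⟩
  calc √(k / n) = ‖x j₀‖ := by rw [hxj₀, sum_norm_dftColumn_sq]
    _ ≤ linfC x.ofLp := norm_le_linfC x.ofLp j₀
end

section
/- Let G : ℝ^k → ℝ^n be a (k,d,n)-generative ReLU network with layer widths k = k_0 ≤ k_1,…,k_d, k_d = n. Then the difference set range(G) − range(G) := { G(x) − G(y) : x, y ∈ ℝ^k } is a union of at most (2e·k̄/k)^{2k(d−1)} polyhedral cones, each contained in a linear subspace of dimension at most 2k, where k̄ := (Π_{ℓ=1}^{d−1} k_ℓ)^{1/(d−1)} is the geometric mean of the hidden layer widths of G. -/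
/-!
Feeding `x` and `y` through two copies of `G` side by side, `(x, y) ↦ G x - G y` is a ReLU network
on `ℝ^{2k}` with hidden weights `diag(W^{(i)}, W^{(i)})` and output weights `[W^{(d)}, -W^{(d)}]`.
Such a network is linear on each piece of a finite cover of `ℝ^{2k}` by polyhedral cones: a hidden
layer of width `k_ℓ` splits each piece along `2 k_ℓ` hyperplanes through the origin of `ℝ^{2k}`,
which cut it into at most `∑_{j ≤ 2k} (2k_ℓ choose j) ≤ (e k_ℓ / k)^{2k}` closed cells. The
difference set is the union of the images of the pieces; each is a polyhedral cone by the
Minkowski–Weyl theorem and lies in the range of a linear map on `ℝ^{2k}`.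
-/

/-- The hidden layers of a ReLU network: `hid k W j z = σ(W^{(j)} ⋯ σ(W^{(1)} z))`,
where `σ = max(·,0)` acts entrywise. -/
noncomputable def hid (k : ℕ → ℕ) (W : ∀ i : ℕ, Matrix (Fin (k (i + 1))) (Fin (k i)) ℝ) :
    (j : ℕ) → (Fin (k 0) → ℝ) → Fin (k j) → ℝ
  | 0, z => z
  | (j + 1), z => fun t => max (Matrix.mulVec (W j) (hid k W j z) t) 0

/-- A `(k 0, d+1, k (d+1))`-generative ReLU network:
`genNet k W d z = W^{(d+1)} σ(W^{(d)} ⋯ σ(W^{(1)} z))` (so the paper's depth is `d+1`,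
with hidden widths `k 1, …, k d` and output width `k (d+1)`). -/
noncomputable def genNet (k : ℕ → ℕ) (W : ∀ i : ℕ, Matrix (Fin (k (i + 1))) (Fin (k i)) ℝ)
    (d : ℕ) (z : Fin (k 0) → ℝ) : Fin (k (d + 1)) → ℝ :=
  Matrix.mulVec (W d) (hid k W d z)

/-- A polyhedral cone: the set of conic (nonnegative) combinations of finitely many vectors. -/
def IsPolyhedralCone {n : ℕ} (C : Set (Fin n → ℝ)) : Prop :=
  ∃ (N : ℕ) (v : Fin N → Fin n → ℝ),
    C = {x | ∃ c : Fin N → ℝ, (∀ i, 0 ≤ c i) ∧ x = ∑ i, c i • v i}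

open Finset PointedCone

section Cones

variable {E : Type*} [AddCommGroup E] [Module ℝ E]

lemma mem_hull_of_mapsTo {F : Type*} [AddCommGroup F] [Module ℝ F] {L : E →ₗ[ℝ] F}
    {s : Set E} {t : Set F} (h : Set.MapsTo L s (hull ℝ t)) {x : E} (hx : x ∈ hull ℝ s) :
    L x ∈ hull ℝ t :=
  (Submodule.map_span_le (L.restrictScalars {c : ℝ // 0 ≤ c}) s _).2 h ⟨x, hx, rfl⟩

lemma mem_dual_id_singleton {f : Module.Dual ℝ E} {x : E} :
    x ∈ dual .id {f} ↔ 0 ≤ f x := by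
  simp

lemma PointedCone.fg_top [FiniteDimensional ℝ E] : (⊤ : PointedCone ℝ E).FG := by
  let b := Module.finBasis ℝ E
  refine Submodule.fg_def.2 ⟨Set.range b ∪ Set.range fun i => -b i,
    (Set.finite_range _).union (Set.finite_range _), eq_top_iff.2 fun z _ => ?_⟩
  rw [← b.sum_repr z]
  refine Submodule.sum_mem _ fun i _ => ?_
  rcases le_total 0 (b.repr z i) with h | h
  · exact smul_mem _ h (subset_hull (Or.inl ⟨i, rfl⟩))
  · rw [← neg_neg (b.repr z i), neg_smul, ← smul_neg]
    exact smul_mem _ (neg_nonneg.2 h) (subset_hull (Or.inr ⟨i, rfl⟩))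

lemma eq_zero_of_mem_hull_of_map_eq_zero {f : Module.Dual ℝ E} {N : Set E}
    (hN : ∀ w ∈ N, f w < 0) {n : E} (hn : n ∈ hull ℝ N) (hfn : f n = 0) : n = 0 := by
  suffices ∀ n ∈ hull ℝ N, f n ≤ 0 ∧ (f n = 0 → n = 0) from (this n hn).2 hfn
  intro n hn
  induction hn using Submodule.span_induction with
  | mem w hw => exact ⟨(hN w hw).le, fun h => absurd h (hN w hw).ne⟩
  | zero => simp
  | add x y _ _ hx hy =>
    rw [map_add]
    refine ⟨add_nonpos hx.1 hy.1, fun h => ?_⟩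
    rw [hx.2 (by linarith [hx.1, hy.1]), hy.2 (by linarith [hx.1, hy.1]), add_zero]
  | smul c x _ hx =>
    have hfc : f (c • x) = c * f x := map_smul f (c : ℝ) x
    rw [hfc]
    refine ⟨mul_nonpos_of_nonneg_of_nonpos c.2 hx.1, fun h => ?_⟩
    rcases mul_eq_zero.1 h with h | h
    · exact (congrArg (· • x) h).trans (zero_smul ℝ x)
    · rw [hx.2 h, smul_zero]

/-- Fourier–Motzkin elimination: generators of `hull s ⊓ {f ≥ 0}`. -/
def fourierMotzkin (f : Module.Dual ℝ E) (s : Set E) : Set E :=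
  {v ∈ s | 0 ≤ f v} ∪ Set.image2 (fun v w => f v • w - f w • v) {v ∈ s | 0 ≤ f v} {w ∈ s | f w < 0}

variable {f : Module.Dual ℝ E} {s : Set E}

lemma fourierMotzkin_finite (hs : s.Finite) : (fourierMotzkin f s).Finite :=
  (hs.subset fun _ h => h.1).union ((hs.subset fun _ h => h.1).image2 _ (hs.subset fun _ h => h.1))

lemma hull_fourierMotzkin_le : hull ℝ (fourierMotzkin f s) ≤ hull ℝ s ⊓ dual .id {f} := by
  refine Submodule.span_le.2 ?_
  rintro _ (hv | ⟨v, hv, w, hw, rfl⟩)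
  · exact ⟨subset_hull hv.1, mem_dual_id_singleton.2 hv.2⟩
  · refine ⟨?_, mem_dual_id_singleton.2 (by simp [mul_comm])⟩
    show f v • w - f w • v ∈ hull ℝ s
    rw [sub_eq_add_neg, ← neg_smul]
    exact add_mem (smul_mem _ hv.2 (subset_hull hw.1))
      (smul_mem _ (neg_nonneg.2 hw.2.le) (subset_hull hv.1))

lemma smul_sub_smul_mem_hull_image2 {P N : Set E} {p n : E} (hp : p ∈ hull ℝ P)
    (hn : n ∈ hull ℝ N) :
    f p • n - f n • p ∈ hull ℝ (Set.image2 (fun v w => f v • w - f w • v) P N) := by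
  have hgen : ∀ w ∈ N,
      f p • w - f w • p ∈ hull ℝ (Set.image2 (fun v w => f v • w - f w • v) P N) := by
    intro w hw
    refine mem_hull_of_mapsTo (L := f.smulRight w - f w • LinearMap.id) ?_ hp
    intro v hv
    exact subset_hull ⟨v, hv, w, hw, rfl⟩
  refine mem_hull_of_mapsTo (L := f p • LinearMap.id - f.smulRight p) ?_ hn
  intro w hw
  exact hgen w hw

/-- Split `x = p + n` with `p` in the hull of the generators on the nonnegative side and `n` in
that of the others; then `(f p) • x = (f p + f n) • p + (f p • n - f n • p)`. -/
lemma le_hull_fourierMotzkin : hull ℝ s ⊓ dual .id {f} ≤ hull ℝ (fourierMotzkin f s) := by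
  set P : Set E := {v ∈ s | 0 ≤ f v}
  set N : Set E := {v ∈ s | f v < 0}
  rintro x ⟨hxs, hfx⟩
  have hsPN : s = P ∪ N := by
    ext v
    simp [P, N, ← and_or_left, le_or_gt]
  rw [hsPN, SetLike.mem_coe, hull, Submodule.span_union, Submodule.mem_sup] at hxs
  obtain ⟨p, hp, n, hn, rfl⟩ := hxs
  replace hfx : 0 ≤ f p + f n := by simpa using mem_dual_id_singleton.1 hfx
  have hfp : 0 ≤ f p := mem_dual_id_singleton.1
    ((Submodule.span_le.2 fun v hv => mem_dual_id_singleton.2 hv.2) hp)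
  have hpG : p ∈ hull ℝ (fourierMotzkin f s) := Submodule.span_mono Set.subset_union_left hp
  rcases hfp.eq_or_lt with hp0 | hp0
  · have hfn : f n ≤ 0 := by
      simpa using mem_dual_id_singleton.1 ((Submodule.span_le.2 fun v (hv : v ∈ N) =>
        mem_dual_id_singleton.2 (by simpa using hv.2.le : 0 ≤ (-f) v)) hn)
    rwa [eq_zero_of_mem_hull_of_map_eq_zero (fun w hw => hw.2) hn (by linarith),
      add_zero]
  · have hx : p + n = (f p)⁻¹ • ((f p + f n) • p + (f p • n - f n • p)) := by
      rw [add_smul, add_add_sub_cancel, ← smul_add, inv_smul_smul₀ hp0.ne']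
    rw [hx]
    exact smul_mem _ (inv_nonneg.2 hp0.le) (add_mem (smul_mem _ hfx hpG)
      (Submodule.span_mono Set.subset_union_right (smul_sub_smul_mem_hull_image2 hp hn)))

lemma PointedCone.fg_inf_dual_singleton {C : PointedCone ℝ E} (hC : C.FG)
    (f : Module.Dual ℝ E) : (C ⊓ dual .id {f}).FG := by
  obtain ⟨s, rfl⟩ := hC
  exact Submodule.fg_def.2 ⟨_, fourierMotzkin_finite s.finite_toSet,
    le_antisymm hull_fourierMotzkin_le le_hull_fourierMotzkin⟩

/-- The Minkowski–Weyl theorem, in the direction from H-cones to V-cones. -/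
theorem PointedCone.DualFG.fg [FiniteDimensional ℝ E] {C : PointedCone ℝ E}
    (hC : C.DualFG .id) : C.FG := by
  classical
  obtain ⟨s, rfl⟩ := hC
  induction s using Finset.induction_on with
  | empty => simpa using fg_top
  | insert f s _ ih =>
    rw [Finset.coe_insert, dual_insert, inf_comm]
    exact fg_inf_dual_singleton ih f

lemma PointedCone.isPolyhedralCone_of_fg {n : ℕ} {C : PointedCone ℝ (Fin n → ℝ)} (hC : C.FG) :
    IsPolyhedralCone (C : Set (Fin n → ℝ)) := by
  obtain ⟨N, v, hv⟩ := Submodule.fg_iff_exists_fin_generating_family.1 hC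
  refine ⟨N, v, Set.ext fun x => ?_⟩
  rw [← hv, SetLike.mem_coe, Submodule.mem_span_range_iff_exists_fun]
  constructor
  · rintro ⟨c, rfl⟩
    exact ⟨fun i => c i, fun i => (c i).2, rfl⟩
  · rintro ⟨c, hc, rfl⟩
    exact ⟨fun i => ⟨c i, hc i⟩, rfl⟩

end Cones

section SignPatterns

variable {E : Type*} [AddCommGroup E] [Module ℝ E] {κ : Type*}

def signed (g : κ → Module.Dual ℝ E) (s : κ → Bool) (t : κ) : Module.Dual ℝ E :=
  bif s t then g t else -g t

lemma signed_apply (g : κ → Module.Dual ℝ E) (s : κ → Bool) (t : κ) (z : E) :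
    signed g s t z = bif s t then g t z else -g t z := by
  unfold signed
  cases s t <;> rfl

open Classical in
noncomputable def strictSignPatterns [Fintype κ] (g : κ → Module.Dual ℝ E)
    (V : Submodule ℝ E) : Finset (κ → Bool) :=
  {s | ∃ z ∈ V, ∀ t, 0 < signed g s t z}

lemma mem_strictSignPatterns [Fintype κ] {g : κ → Module.Dual ℝ E} {V : Submodule ℝ E}
    {s : κ → Bool} : s ∈ strictSignPatterns g V ↔ ∃ z ∈ V, ∀ t, 0 < signed g s t z := by
  simp [strictSignPatterns]

lemma sum_range_choose_succ (p m : ℕ) :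
    ∑ j ∈ range (m + 1), (p + 1).choose j =
      ∑ j ∈ range (m + 1), p.choose j + ∑ j ∈ range m, p.choose j := by
  induction m with
  | zero => simp
  | succ m ih =>
    rw [sum_range_succ, ih, Nat.choose_succ_succ', sum_range_succ _ (m + 1), sum_range_succ _ m]
    ring

variable {p : ℕ} {g : Fin (p + 1) → Module.Dual ℝ E} {V : Submodule ℝ E}

lemma tail_mem_strictSignPatterns {s : Fin (p + 1) → Bool}
    (hs : s ∈ strictSignPatterns g V) : Fin.tail s ∈ strictSignPatterns (Fin.tail g) V := by
  obtain ⟨z, hzV, hz⟩ := mem_strictSignPatterns.1 hs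
  exact mem_strictSignPatterns.2 ⟨z, hzV, fun t => hz t.succ⟩

/-- The points realising the two extensions have a positive combination on `g 0 = 0`. -/
lemma mem_strictSignPatterns_inf_ker {s : Fin p → Bool}
    (hpos : Fin.cons true s ∈ strictSignPatterns g V)
    (hneg : Fin.cons false s ∈ strictSignPatterns g V) :
    s ∈ strictSignPatterns (Fin.tail g) (V ⊓ LinearMap.ker (g 0)) := by
  obtain ⟨x, hxV, hx⟩ := mem_strictSignPatterns.1 hpos
  obtain ⟨y, hyV, hy⟩ := mem_strictSignPatterns.1 hneg
  have hx0 : 0 < g 0 x := by simpa [signed] using hx 0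
  have hy0 : 0 < -g 0 y := by simpa [signed] using hy 0
  refine mem_strictSignPatterns.2 ⟨(-g 0 y) • x + g 0 x • y,
    ⟨V.add_mem (V.smul_mem _ hxV) (V.smul_mem _ hyV), by simp [mul_comm]⟩, fun t => ?_⟩
  have hxt := hx t.succ
  have hyt := hy t.succ
  simp only [signed, Fin.cons_succ] at hxt hyt
  rw [signed, map_add, map_smul, map_smul, smul_eq_mul, smul_eq_mul]
  exact add_pos (mul_pos hy0 hxt) (mul_pos hx0 hyt)

lemma card_le_card_cons_add_card_cons (R : Finset (Fin (p + 1) → Bool)) :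
    #R ≤ #{s | Fin.cons true s ∈ R} + #{s | Fin.cons false s ∈ R} := by
  classical
  refine (card_le_card fun s hs => ?_).trans ((card_union_le _ _).trans
    (add_le_add (card_image_le (f := Fin.cons true)) (card_image_le (f := Fin.cons false))))
  rw [mem_union, mem_image, mem_image]
  have hmem : ∃ t, Fin.cons (s 0) t ∈ R ∧ Fin.cons (s 0) t = s :=
    ⟨Fin.tail s, by rwa [Fin.cons_self_tail], Fin.cons_self_tail s⟩
  cases h : s 0 <;> rw [h] at hmem <;> simp [hmem]

end SignPatterns

theorem card_strictSignPatterns_le {E : Type*} [AddCommGroup E] [Module ℝ E]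
    [FiniteDimensional ℝ E] {p : ℕ} (g : Fin p → Module.Dual ℝ E) (V : Submodule ℝ E) :
    #(strictSignPatterns g V) ≤ ∑ j ∈ range (Module.finrank ℝ V + 1), p.choose j := by
  classical
  induction p generalizing V with
  | zero =>
    calc #(strictSignPatterns g V) ≤ Fintype.card (Fin 0 → Bool) := card_le_univ _
      _ = (0).choose 0 := by simp
      _ ≤ _ := single_le_sum (f := fun j => (0).choose j) (by simp) (by simp)
  | succ p ih =>
    set R := strictSignPatterns g V
    set A : Bool → Finset (Fin p → Bool) := fun b => {s | Fin.cons b s ∈ R}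
    have hunion : A true ∪ A false ⊆ strictSignPatterns (Fin.tail g) V := by
      intro s hs
      obtain ⟨b, hb⟩ : ∃ b, Fin.cons b s ∈ R := by
        rcases mem_union.1 hs with h | h <;> exact ⟨_, (mem_filter.1 h).2⟩
      simpa using tail_mem_strictSignPatterns hb
    have hinter : #(A true ∩ A false) ≤ ∑ j ∈ range (Module.finrank ℝ V), p.choose j := by
      rcases (A true ∩ A false).eq_empty_or_nonempty with h | ⟨s, hs⟩
      · simp [h]
      obtain ⟨hst, hsf⟩ := mem_inter.1 hs
      obtain ⟨x, hxV, hx⟩ := mem_strictSignPatterns.1 (mem_filter.1 hst).2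
      have hlt : V ⊓ LinearMap.ker (g 0) < V :=
        inf_le_left.lt_of_ne fun h => (hx 0).ne' (by
          simpa [signed] using (by rw [h]; exact hxV : x ∈ V ⊓ LinearMap.ker (g 0)).2)
      calc #(A true ∩ A false)
          ≤ #(strictSignPatterns (Fin.tail g) (V ⊓ LinearMap.ker (g 0))) :=
            card_le_card fun s hs => mem_strictSignPatterns_inf_ker
              (mem_filter.1 (mem_inter.1 hs).1).2 (mem_filter.1 (mem_inter.1 hs).2).2
        _ ≤ ∑ j ∈ range (Module.finrank ℝ ↥(V ⊓ LinearMap.ker (g 0)) + 1), p.choose j := ih _ _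
        _ ≤ _ := sum_le_sum_of_subset (range_subset_range.2
            (Submodule.finrank_lt_finrank_of_lt hlt))
    calc #R ≤ #(A true) + #(A false) := card_le_card_cons_add_card_cons R
      _ = #(A true ∪ A false) + #(A true ∩ A false) := (card_union_add_card_inter _ _).symm
      _ ≤ ∑ j ∈ range (Module.finrank ℝ V + 1), p.choose j
          + ∑ j ∈ range (Module.finrank ℝ V), p.choose j :=
        add_le_add ((card_le_card hunion).trans (ih _ V)) hinter
      _ = _ := (sum_range_choose_succ p _).symm

section Cover

open Filter Topology

lemma eventually_sign_add_mul {a b : ℝ} (hb : b ≠ 0) :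
    ∀ᶠ ε in 𝓝[>] 0, (0 < a + ε * b ∧ 0 ≤ a) ∨ (a + ε * b < 0 ∧ a ≤ 0) := by
  have hlim : Tendsto (fun ε => a + ε * b) (𝓝 0) (𝓝 a) :=
    (by fun_prop : Continuous fun ε : ℝ => a + ε * b).tendsto' 0 a (by simp)
  rcases lt_trichotomy a 0 with ha | rfl | ha
  · exact nhdsWithin_le_nhds ((hlim.eventually (gt_mem_nhds ha)).mono fun ε h => .inr ⟨h, ha.le⟩)
  · filter_upwards [self_mem_nhdsWithin] with ε (hε : 0 < ε)
    rcases hb.lt_or_gt with hb | hb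
    · exact .inr ⟨by simpa using mul_neg_of_pos_of_neg hε hb, le_rfl⟩
    · exact .inl ⟨by simpa using mul_pos hε hb, le_rfl⟩
  · exact nhdsWithin_le_nhds ((hlim.eventually (lt_mem_nhds ha)).mono fun ε h => .inl ⟨h, ha.le⟩)

lemma cond_decide_pos_of_same_sign {x y : ℝ} (h : (0 < x ∧ 0 ≤ y) ∨ (x < 0 ∧ y ≤ 0)) :
    0 < (bif decide (0 < x) then x else -x) ∧ 0 ≤ (bif decide (0 < x) then y else -y) := by
  rcases h with ⟨hx, hy⟩ | ⟨hx, hy⟩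
  · simp [hx, hy]
  · simp [hx, hy, hx.not_gt]

variable {E : Type*} [AddCommGroup E] [Module ℝ E] {κ : Type*}

/-- Move `z` a little in a direction on which no `g t` vanishes. -/
lemma exists_strict_sign_near [Finite κ] {g : κ → Module.Dual ℝ E} (hg : ∀ t, g t ≠ 0)
    (z : E) : ∃ w, ∀ t, (0 < g t w ∧ 0 ≤ g t z) ∨ (g t w < 0 ∧ g t z ≤ 0) := by
  obtain ⟨u, hu⟩ := Module.Dual.exists_forall_ne_zero_of_forall_exists g fun t => by
    simpa [DFunLike.ne_iff] using hg t
  obtain ⟨ε, hε⟩ := (eventually_all.2 fun t => eventually_sign_add_mul (a := g t z) (hu t)).exists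
  exact ⟨z + ε • u, fun t => by simpa using hε t⟩

theorem exists_signPatterns_cover [Fintype κ] [FiniteDimensional ℝ E]
    (g : κ → Module.Dual ℝ E) :
    ∃ S : Finset (κ → Bool),
      #S ≤ ∑ j ∈ range (Module.finrank ℝ E + 1), (Fintype.card κ).choose j ∧
      ∀ z, ∃ s ∈ S, ∀ t, 0 ≤ signed g s t z := by
  classical
  let e := Fintype.equivFin {t // g t ≠ 0}
  let g' : Fin (Fintype.card {t // g t ≠ 0}) → Module.Dual ℝ E := fun i => g (e.symm i)
  let extend : (Fin (Fintype.card {t // g t ≠ 0}) → Bool) → κ → Bool :=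
    fun s t => if h : g t = 0 then true else s (e ⟨t, h⟩)
  refine ⟨(strictSignPatterns g' ⊤).image extend, ?_, fun z => ?_⟩
  · calc _ ≤ #(strictSignPatterns g' ⊤) := card_image_le
      _ ≤ _ := finrank_top ℝ E ▸ card_strictSignPatterns_le g' ⊤
      _ ≤ _ := sum_le_sum fun j _ => Nat.choose_le_choose j (Fintype.card_subtype_le _)
  obtain ⟨w, hw⟩ := exists_strict_sign_near (fun i => (e.symm i).2) z
  refine ⟨extend fun i => decide (0 < g' i w), mem_image_of_mem _ ?_, fun t => ?_⟩
  · refine mem_strictSignPatterns.2 ⟨w, Submodule.mem_top, fun i => ?_⟩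
    rw [signed_apply]
    exact (cond_decide_pos_of_same_sign (hw i)).1
  · by_cases ht : g t = 0
    · simp [signed_apply, ht]
    · have hext : extend (fun i => decide (0 < g' i w)) t = decide (0 < g t w) := by
        simp [extend, ht, g']
      have hwt := hw (e ⟨t, ht⟩)
      rw [e.symm_apply_apply] at hwt
      rw [signed_apply, hext]
      exact (cond_decide_pos_of_same_sign hwt).2

end Cover

section Conewise

variable {E F G : Type*} [AddCommGroup E] [Module ℝ E] [AddCommGroup F] [Module ℝ F]
  [AddCommGroup G] [Module ℝ G]

def IsConewiseLinear (f : E → F) (N : ℕ) : Prop :=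
  ∃ P : Finset (PointedCone ℝ E × (E →ₗ[ℝ] F)), #P ≤ N ∧
    (∀ p ∈ P, p.1.DualFG .id ∧ ∀ z ∈ p.1, f z = p.2 z) ∧ ∀ z, ∃ p ∈ P, z ∈ p.1

lemma LinearMap.isConewiseLinear (L : E →ₗ[ℝ] F) : IsConewiseLinear L 1 :=
  ⟨{(⊤, L)}, by simp, by simp, fun _ => ⟨_, mem_singleton_self _, Submodule.mem_top⟩⟩

lemma IsConewiseLinear.linearMap_comp {f : E → F} {N : ℕ} (hf : IsConewiseLinear f N)
    (A : F →ₗ[ℝ] G) : IsConewiseLinear (A ∘ f) N := by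
  classical
  obtain ⟨P, hcard, hP, hcov⟩ := hf
  refine ⟨P.image fun p => (p.1, A ∘ₗ p.2), card_image_le.trans hcard, ?_, fun z => ?_⟩
  · simp only [mem_image]
    rintro _ ⟨p, hp, rfl⟩
    exact ⟨(hP p hp).1, fun z hz => by simp [(hP p hp).2 z hz]⟩
  · obtain ⟨p, hp, hz⟩ := hcov z
    exact ⟨_, mem_image_of_mem _ hp, hz⟩

lemma posPart_eq_of_signed_nonneg {κ : Type*} {v : κ → ℝ} {s : κ → Bool}
    (h : ∀ t, 0 ≤ bif s t then v t else -v t) : v⁺ = fun t => bif s t then v t else 0 := by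
  funext t
  have ht := h t
  rw [Pi.posPart_apply]
  cases hst : s t <;> simp only [hst, cond_false, cond_true] at ht ⊢
  · exact posPart_eq_zero.2 (neg_nonneg.1 ht)
  · exact posPart_eq_self.2 ht

/-- On each closed cell of the arrangement `(L z) t = 0` the map `z ↦ (L z)⁺` is linear. -/
lemma IsConewiseLinear.posPart [FiniteDimensional ℝ E] {κ : Type*} [Fintype κ]
    {f : E → κ → ℝ} {N : ℕ} (hf : IsConewiseLinear f N) :
    IsConewiseLinear (fun z => (f z)⁺)
      (N * ∑ j ∈ range (Module.finrank ℝ E + 1), (Fintype.card κ).choose j) := by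
  classical
  obtain ⟨P, hcard, hP, hcov⟩ := hf
  let g : (E →ₗ[ℝ] κ → ℝ) → κ → Module.Dual ℝ E := fun L t => LinearMap.proj t ∘ₗ L
  choose S hScard hScov using fun L => exists_signPatterns_cover (g L)
  refine ⟨P.biUnion fun p => (S p.2).image fun s =>
      (p.1 ⊓ dual .id (Set.range (signed (g p.2) s)),
        LinearMap.pi fun t => bif s t then g p.2 t else 0), ?_, ?_, fun z => ?_⟩
  · calc _ ≤ ∑ p ∈ P, #((S p.2).image _) := card_biUnion_le
      _ ≤ ∑ _p ∈ P, ∑ j ∈ range (Module.finrank ℝ E + 1), (Fintype.card κ).choose j :=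
        sum_le_sum fun p _ => card_image_le.trans (hScard _)
      _ ≤ _ := by rw [sum_const, smul_eq_mul]; exact Nat.mul_le_mul_right _ hcard
  · simp only [mem_biUnion, mem_image]
    rintro _ ⟨p, hp, s, -, rfl⟩
    refine ⟨(hP p hp).1.inf (DualFG.dual_of_finite _ (Set.finite_range _)), ?_⟩
    rintro z ⟨hzp, hzs⟩
    have hsign : ∀ t, 0 ≤ bif s t then p.2 z t else -p.2 z t := fun t => by
      simpa [signed_apply, g] using hzs (Set.mem_range_self t)
    rw [(hP p hp).2 z hzp, posPart_eq_of_signed_nonneg hsign]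
    funext t
    cases hst : s t <;> simp [g, hst]
  · obtain ⟨p, hp, hzp⟩ := hcov z
    obtain ⟨s, hs, hzs⟩ := hScov p.2 z
    refine ⟨_, mem_biUnion.2 ⟨p, hp, mem_image_of_mem _ hs⟩, hzp, ?_⟩
    rintro _ ⟨t, rfl⟩
    exact hzs t

lemma IsConewiseLinear.exists_range_eq_iUnion [FiniteDimensional ℝ E] {n : ℕ}
    {f : E → Fin n → ℝ} {N : ℕ} (hf : IsConewiseLinear f N) :
    ∃ (M : ℕ) (S : Fin M → Set (Fin n → ℝ)), M ≤ N ∧ Set.range f = ⋃ i, S i ∧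
      (∀ i, IsPolyhedralCone (S i)) ∧
      ∀ i, ∃ V : Submodule ℝ (Fin n → ℝ), Module.finrank ℝ V ≤ Module.finrank ℝ E ∧ S i ⊆ V := by
  obtain ⟨P, hcard, hP, hcov⟩ := hf
  let piece : Fin #P → PointedCone ℝ E × (E →ₗ[ℝ] Fin n → ℝ) := fun i => P.equivFin.symm i
  have hpiece : ∀ i, piece i ∈ P := fun i => (P.equivFin.symm i).2
  refine ⟨#P, fun i => (piece i).2 '' (piece i).1, hcard, ?_, fun i => ?_, fun i => ?_⟩
  · ext u
    simp only [Set.mem_range, Set.mem_iUnion, Set.mem_image]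
    constructor
    · rintro ⟨z, rfl⟩
      obtain ⟨p, hp, hzp⟩ := hcov z
      refine ⟨P.equivFin ⟨p, hp⟩, z, by simpa [piece] using hzp, ?_⟩
      simpa [piece] using ((hP p hp).2 z hzp).symm
    · rintro ⟨i, z, hz, rfl⟩
      exact ⟨z, (hP _ (hpiece i)).2 z hz⟩
  · dsimp only
    rw [← PointedCone.coe_map]
    exact isPolyhedralCone_of_fg ((hP _ (hpiece i)).1.fg.map _)
  · exact ⟨LinearMap.range (piece i).2, LinearMap.finrank_range_le _,
      Set.image_subset_iff.2 fun z _ => LinearMap.mem_range_self _ z⟩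

end Conewise

section Counting

/-- With `x = m / p`: `(∑_{j ≤ m} (p choose j)) x^m ≤ (1 + x)^p ≤ e^{xp} = e^m`. -/
lemma sum_range_choose_le_pow {m p : ℕ} (hmp : m ≤ p) :
    (∑ j ∈ range (m + 1), p.choose j : ℝ) ≤ (Real.exp 1 * p / m) ^ m := by
  rcases m.eq_zero_or_pos with rfl | hm
  · simp
  have hp : (0 : ℝ) < p := by exact_mod_cast hm.trans_le hmp
  set x : ℝ := m / p
  have hx0 : 0 < x := by positivity
  have hx1 : x ≤ 1 := div_le_one_of_le₀ (by exact_mod_cast hmp) hp.le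
  have key : (∑ j ∈ range (m + 1), p.choose j : ℝ) * x ^ m ≤ Real.exp 1 ^ m :=
    calc (∑ j ∈ range (m + 1), p.choose j : ℝ) * x ^ m
        ≤ ∑ j ∈ range (m + 1), (p.choose j : ℝ) * x ^ j := by
          rw [sum_mul]
          exact sum_le_sum fun j hj => mul_le_mul_of_nonneg_left
            (pow_le_pow_of_le_one hx0.le hx1 (Nat.lt_succ_iff.1 (mem_range.1 hj))) (by positivity)
      _ ≤ ∑ j ∈ range (p + 1), (p.choose j : ℝ) * x ^ j :=
          sum_le_sum_of_subset_of_nonneg (range_subset_range.2 (by omega))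
            fun _ _ _ => by positivity
      _ = (1 + x) ^ p := by rw [add_comm 1 x, add_pow]; simp [mul_comm]
      _ ≤ Real.exp x ^ p := by gcongr; linarith [Real.add_one_le_exp x]
      _ = Real.exp 1 ^ m := by
          rw [← Real.exp_nat_mul, ← Real.exp_nat_mul]
          congr 1
          simp only [x]
          field_simp
  rw [show Real.exp 1 * p / m = Real.exp 1 / x by simp only [x]; field_simp, div_pow,
    le_div_iff₀ (by positivity)]
  exact key

lemma sum_range_choose_add_self_le {a b : ℕ} (hab : a ≤ b) :
    (∑ i ∈ range (a + a + 1), (b + b).choose i : ℝ) ≤ (2 * Real.exp 1 * b / a) ^ (2 * a) :=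
  calc _ ≤ (Real.exp 1 * (b + b : ℕ) / (a + a : ℕ)) ^ (a + a) :=
        sum_range_choose_le_pow (by omega)
    _ = (Real.exp 1 * b / a) ^ (2 * a) := by rw [← two_mul]; push_cast; ring
    _ ≤ _ := by gcongr; linarith [Real.exp_pos 1]

end Counting

section Network

open scoped Matrix

variable (k : ℕ → ℕ) (W : ∀ i : ℕ, Matrix (Fin (k (i + 1))) (Fin (k i)) ℝ)

/-- The hidden layers run on `z ∘ Sum.inl` and `z ∘ Sum.inr` side by side: the hidden layers of
the network with weights `diag(W^{(i)}, W^{(i)})`. -/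
noncomputable def hidPair (j : ℕ) (z : Fin (k 0) ⊕ Fin (k 0) → ℝ) : Fin (k j) ⊕ Fin (k j) → ℝ :=
  Sum.elim (hid k W j (z ∘ Sum.inl)) (hid k W j (z ∘ Sum.inr))

lemma hidPair_zero : hidPair k W 0 = id :=
  funext Sum.elim_comp_inl_inr

lemma hidPair_succ (j : ℕ) (z : Fin (k 0) ⊕ Fin (k 0) → ℝ) :
    hidPair k W (j + 1) z = (Matrix.fromBlocks (W j) 0 0 (W j) *ᵥ hidPair k W j z)⁺ := by
  ext (t | t) <;> simp [hidPair, hid, Matrix.fromBlocks_mulVec, posPart_def]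

lemma isConewiseLinear_hidPair (j : ℕ) :
    IsConewiseLinear (hidPair k W j)
      (∏ ℓ ∈ range j, ∑ i ∈ range (k 0 + k 0 + 1), (k (ℓ + 1) + k (ℓ + 1)).choose i) := by
  induction j with
  | zero => simpa [hidPair_zero] using (LinearMap.id : _ →ₗ[ℝ] _).isConewiseLinear
  | succ j ih =>
    have := (ih.linearMap_comp (Matrix.fromBlocks (W j) 0 0 (W j)).mulVecLin).posPart
    simp only [Module.finrank_fintype_fun_eq_card, Fintype.card_sum, Fintype.card_fin] at this
    rw [prod_range_succ]
    convert this using 1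
    exact funext (hidPair_succ k W j)

lemma genNet_sub_genNet (d : ℕ) (x y : Fin (k 0) → ℝ) :
    genNet k W d x - genNet k W d y =
      Matrix.fromCols (W d) (-W d) *ᵥ hidPair k W d (Sum.elim x y) := by
  simp [genNet, hidPair, Matrix.neg_mulVec, sub_eq_add_neg]

end Network

theorem difference_set_is_union_of_cones_general
    (d : ℕ) (k : ℕ → ℕ) (W : ∀ i : ℕ, Matrix (Fin (k (i + 1))) (Fin (k i)) ℝ)
    (hmono : ∀ i, i ≤ d + 1 → k 0 ≤ k i) :
    ∃ (N : ℕ) (S : Fin N → Set (Fin (k (d + 1)) → ℝ)),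
      (N : ℝ) ≤ ∏ ℓ ∈ Finset.range d,
          (2 * Real.exp 1 * (k (ℓ + 1)) / (k 0)) ^ (2 * k 0) ∧
      {u | ∃ x y, u = genNet k W d x - genNet k W d y} = ⋃ i, S i ∧
      (∀ i, IsPolyhedralCone (S i)) ∧
      (∀ i, ∃ E : Submodule ℝ (Fin (k (d + 1)) → ℝ),
          Module.finrank ℝ E ≤ 2 * k 0 ∧ S i ⊆ E) := by
  obtain ⟨N, S, hN, hrange, hcone, hdim⟩ :=
    ((isConewiseLinear_hidPair k W d).linearMap_comp
      (Matrix.fromCols (W d) (-W d)).mulVecLin).exists_range_eq_iUnion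
  refine ⟨N, S, ?_, ?_, hcone, fun i => ?_⟩
  · calc (N : ℝ)
        ≤ ∏ ℓ ∈ range d, (∑ i ∈ range (k 0 + k 0 + 1), (k (ℓ + 1) + k (ℓ + 1)).choose i : ℝ) := by
          exact_mod_cast hN
      _ ≤ _ := prod_le_prod (fun _ _ => by positivity) fun ℓ hℓ =>
          sum_range_choose_add_self_le (hmono (ℓ + 1) (by simp at hℓ; omega))
  · rw [← hrange]
    ext u
    constructor
    · rintro ⟨x, y, rfl⟩
      exact ⟨Sum.elim x y, (genNet_sub_genNet k W d x y).symm⟩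
    · rintro ⟨z, rfl⟩
      refine ⟨z ∘ Sum.inl, z ∘ Sum.inr, ?_⟩
      rw [genNet_sub_genNet, Sum.elim_comp_inl_inr]
      rfl
  · obtain ⟨V, hV, hSV⟩ := hdim i
    exact ⟨V, hV.trans_eq (by simp [Module.finrank_fintype_fun_eq_card, two_mul]), hSV⟩

/-- the difference set `range(G) − range(G)` of a `(k, d, n)`-generative
ReLU network (here with depth `d+1`, input width `k = k 0`, hidden widths
`k 1, …, k d`, output width `n = k (d+1)`, each hidden width at least `k 0`) is a
union of at most `(2e·k̄/k)^{2k·d} = ∏_{ℓ=1}^{d} (2e·k_ℓ/k)^{2k}` polyhedral cones,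
each contained in a linear subspace of dimension at most `2k`. -/
theorem difference_set_is_union_of_cones
    (d : ℕ) (k : ℕ → ℕ) (W : ∀ i : ℕ, Matrix (Fin (k (i + 1))) (Fin (k i)) ℝ)
    (hk : 2 ≤ k 0) (hmono : ∀ i, i ≤ d + 1 → k 0 ≤ k i) :
    ∃ (N : ℕ) (S : Fin N → Set (Fin (k (d + 1)) → ℝ)),
      (N : ℝ) ≤ ∏ ℓ ∈ Finset.range d,
          (2 * Real.exp 1 * (k (ℓ + 1)) / (k 0)) ^ (2 * k 0) ∧
      {u | ∃ x y, u = genNet k W d x - genNet k W d y} = ⋃ i, S i ∧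
      (∀ i, IsPolyhedralCone (S i)) ∧
      (∀ i, ∃ E : Submodule ℝ (Fin (k (d + 1)) → ℝ),
          Module.finrank ℝ E ≤ 2 * k 0 ∧ S i ⊆ E) :=
  difference_set_is_union_of_cones_general d k W hmono
end

section
/- Let S ⊆ ℝ^n be a k-dimensional linear subspace (1 ≤ k ≤ n). Then the number of sign vectors ε ∈ {−1, +1}^n for which there exists x ∈ S with ε_i·x_i > 0 for all i ∈ [n] (i.e., the number of open orthants of ℝ^n that S intersects) is at most 2^k·C(n,k), where C(n,k) is the binomial coefficient; consequently it is at most 2^k·(e·n/k)^k. -/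
/-!
Restrict the coordinate functionals to `S`. Split the sign patterns of functionals `f 0, …, f n`
by the sign of the last one, `g = f n`. A pattern of the first `n` functionals extends in at most
two ways, and in both ways only if it is realised on `ker g`: if `g x > 0 > g y` realise it, so
does the positive combination `g x • y - g y • x ∈ ker g`. So the count obeys Pascal's recursion
in `n` and the dimension `k`, giving at most `∑_{j ≤ k} C(n, j) ≤ 2^k C(n, k)` patterns; finally
`C(n, k) ≤ n^k / k! ≤ (e n / k)^k` because `k^k / k! ≤ e^k`.
-/

open Finset Module

lemma Set.ncard_eq_ncard_snoc_add_ncard_snoc {n : ℕ} (A : Set (Fin (n + 1) → Bool)) :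
    A.ncard = {δ | Fin.snoc δ true ∈ A}.ncard + {δ | Fin.snoc δ false ∈ A}.ncard := by
  have hfiber (b : Bool) :
      {δ | Fin.snoc δ b ∈ A}.ncard = (A ∩ {ε | ε (Fin.last n) = b}).ncard := by
    rw [← Set.ncard_image_of_injective _ (Fin.snoc_left_injective (α := fun _ ↦ Bool) b)]
    congr 1
    ext ε
    constructor
    · rintro ⟨δ, hδ, rfl⟩
      simpa using hδ
    · rintro ⟨hε, rfl⟩
      exact ⟨Fin.init ε, by simpa using hε, Fin.snoc_init_self ε⟩
  rw [hfiber, hfiber, ← Set.ncard_inter_add_ncard_sdiff_eq_ncard A {ε | ε (Fin.last n) = true}]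
  congr 2
  ext ε
  simp

lemma sum_range_choose_pascal (n m : ℕ) :
    ∑ j ∈ range (m + 2), (n + 1).choose j =
      ∑ j ∈ range (m + 2), n.choose j + ∑ j ∈ range (m + 1), n.choose j := by
  rw [sum_range_succ' _ (m + 1), sum_range_succ' (n.choose ·) (m + 1)]
  simp only [Nat.choose_succ_succ', sum_add_distrib, Nat.choose_zero_right]
  ring

section SignPatterns

variable {𝕜 V : Type*} [Field 𝕜] [LinearOrder 𝕜] [AddCommGroup V] [Module 𝕜 V]

def signPatterns {ι : Type*} (f : ι → Dual 𝕜 V) : Set (ι → Bool) :=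
  {ε | ∃ x, ∀ i, if ε i then 0 < f i x else f i x < 0}

lemma signPatterns_proj_comp_subtype {ι : Type*} (S : Submodule 𝕜 (ι → 𝕜)) :
    signPatterns (fun i ↦ (LinearMap.proj i).comp S.subtype) =
      {ε | ∃ x ∈ S, ∀ i, if ε i then 0 < x i else x i < 0} := by
  ext ε
  simp [signPatterns]

lemma signPatterns_eq_empty_of_eq_zero {ι : Type*} {f : ι → Dual 𝕜 V} {i : ι} (hi : f i = 0) :
    signPatterns f = ∅ := by
  refine Set.eq_empty_of_forall_notMem fun ε ⟨x, hx⟩ ↦ ?_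
  have := hx i
  split_ifs at this <;> simp [hi] at this

lemma mem_signPatterns_init {n : ℕ} {f : Fin (n + 1) → Dual 𝕜 V} {δ : Fin n → Bool} {b : Bool}
    (h : Fin.snoc δ b ∈ signPatterns f) :
    δ ∈ signPatterns (Fin.init f) := by
  obtain ⟨x, hx⟩ := h
  exact ⟨x, fun i ↦ by simpa [Fin.init] using hx i.castSucc⟩

variable [IsStrictOrderedRing 𝕜]

lemma sign_add_of_pos {b : Bool} {a c u v : 𝕜} (ha : 0 < a) (hc : 0 < c)
    (hu : if b then 0 < u else u < 0) (hv : if b then 0 < v else v < 0) :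
    if b then 0 < a * u + c * v else a * u + c * v < 0 := by
  cases b <;> simp only [Bool.false_eq_true, if_true, if_false] at hu hv ⊢
  · nlinarith
  · positivity

lemma mem_signPatterns_ker {n : ℕ} {f : Fin (n + 1) → Dual 𝕜 V} {δ : Fin n → Bool}
    (ht : Fin.snoc δ true ∈ signPatterns f)
    (hf : Fin.snoc δ false ∈ signPatterns f) :
    δ ∈ signPatterns (fun i ↦ (Fin.init f i).comp (LinearMap.ker (f (Fin.last n))).subtype) := by
  obtain ⟨x, hx⟩ := ht
  obtain ⟨y, hy⟩ := hf
  set g := f (Fin.last n)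
  have hgx : 0 < g x := by simpa using hx (Fin.last n)
  have hgy : 0 < -g y := by simpa using hy (Fin.last n)
  have hz : g x • y + (-g y) • x ∈ LinearMap.ker g := by
    simp [mul_comm]
  refine ⟨⟨_, hz⟩, fun i ↦ ?_⟩
  simpa [Fin.init] using
    sign_add_of_pos hgx hgy (by simpa using hy i.castSucc) (by simpa using hx i.castSucc)

theorem ncard_signPatterns_le_sum_choose [FiniteDimensional 𝕜 V] {n : ℕ} (f : Fin n → Dual 𝕜 V) :
    (signPatterns f).ncard ≤ ∑ j ∈ range (finrank 𝕜 V + 1), n.choose j := by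
  induction n generalizing V with
  | zero =>
    exact (Set.ncard_le_one_of_subsingleton _).trans (by simp [sum_range_succ'])
  | succ n ih =>
    set g := f (Fin.last n)
    by_cases hg : g = 0
    · simp [signPatterns_eq_empty_of_eq_zero hg]
    set P : Bool → Set (Fin n → Bool) := fun b ↦ {δ | Fin.snoc δ b ∈ signPatterns f}
    calc (signPatterns f).ncard = (P true).ncard + (P false).ncard :=
          Set.ncard_eq_ncard_snoc_add_ncard_snoc _
      _ = (P true ∪ P false).ncard + (P true ∩ P false).ncard :=
          (Set.ncard_union_add_ncard_inter _ _).symm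
      _ ≤ (signPatterns (Fin.init f)).ncard
          + (signPatterns fun i ↦ (Fin.init f i).comp (LinearMap.ker g).subtype).ncard :=
          add_le_add
            (Set.ncard_le_ncard fun δ h ↦ h.elim mem_signPatterns_init mem_signPatterns_init)
            (Set.ncard_le_ncard fun δ h ↦ mem_signPatterns_ker h.1 h.2)
      _ ≤ ∑ j ∈ range (finrank 𝕜 V + 1), n.choose j
          + ∑ j ∈ range (finrank 𝕜 (LinearMap.ker g) + 1), n.choose j := add_le_add (ih _) (ih _)
      _ = _ := by rw [← g.finrank_ker_add_one_of_ne_zero hg, sum_range_choose_pascal]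

end SignPatterns

lemma sum_range_choose_le_two_pow_mul_choose {n k : ℕ} (hkn : k ≤ n) :
    ∑ j ∈ range (k + 1), n.choose j ≤ 2 ^ k * n.choose k := by
  calc ∑ j ∈ range (k + 1), n.choose j
      ≤ ∑ j ∈ range (k + 1), k.choose j * n.choose k := by
        refine sum_le_sum fun j hj ↦ ?_
        have hjk : j ≤ k := Nat.lt_succ_iff.mp (mem_range.mp hj)
        calc n.choose j ≤ n.choose j * (n - j).choose (k - j) :=
              Nat.le_mul_of_pos_right _ (Nat.choose_pos (by omega))
          _ = k.choose j * n.choose k := by rw [← Nat.choose_mul hjk, mul_comm]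
    _ = 2 ^ k * n.choose k := by rw [← sum_mul, Nat.sum_range_choose]

lemma choose_le_exp_one_mul_div_pow (n k : ℕ) :
    (n.choose k : ℝ) ≤ (Real.exp 1 * n / k) ^ k := by
  rcases k.eq_zero_or_pos with rfl | hk
  · simp
  have hk : (0 : ℝ) < k := by exact_mod_cast hk
  calc (n.choose k : ℝ) ≤ n ^ k / k.factorial := Nat.choose_le_pow_div k n
    _ = (k : ℝ) ^ k / k.factorial * (n / k) ^ k := by rw [div_pow]; field_simp
    _ ≤ Real.exp k * (n / k) ^ k := by
        gcongr
        exact Real.pow_div_factorial_le_exp _ hk.le k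
    _ = (Real.exp 1 * n / k) ^ k := by rw [← Real.exp_one_pow, ← mul_pow, mul_div_assoc]

theorem orthant_crossings_general (n k : ℕ) (hkn : k ≤ n)
    (S : Submodule ℝ (Fin n → ℝ)) (hS : Module.finrank ℝ S = k) :
    Set.ncard {ε : Fin n → Bool | ∃ x ∈ S, ∀ i, if ε i then 0 < x i else x i < 0}
        ≤ 2 ^ k * Nat.choose n k ∧
      (Set.ncard {ε : Fin n → Bool | ∃ x ∈ S, ∀ i, if ε i then 0 < x i else x i < 0} : ℝ)
        ≤ 2 ^ k * (Real.exp 1 * n / k) ^ k := by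
  have hcount : Set.ncard {ε : Fin n → Bool | ∃ x ∈ S, ∀ i, if ε i then 0 < x i else x i < 0}
      ≤ 2 ^ k * n.choose k := by
    rw [← signPatterns_proj_comp_subtype]
    calc _ ≤ ∑ j ∈ range (k + 1), n.choose j := hS ▸ ncard_signPatterns_le_sum_choose _
      _ ≤ 2 ^ k * n.choose k := sum_range_choose_le_two_pow_mul_choose hkn
  refine ⟨hcount, ?_⟩
  calc _ ≤ (2 : ℝ) ^ k * n.choose k := mod_cast hcount
    _ ≤ 2 ^ k * (Real.exp 1 * n / k) ^ k := by gcongr; exact choose_le_exp_one_mul_div_pow n k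

/-- a `k`-dimensional linear subspace `S ⊆ ℝ^n` intersects at most
`2^k·C(n,k)` open orthants (orthants encoded by sign vectors `ε : Fin n → Bool`),
and consequently at most `2^k·(e·n/k)^k` of them. -/
theorem orthant_crossings (n k : ℕ) (hk : 1 ≤ k) (hkn : k ≤ n)
    (S : Submodule ℝ (Fin n → ℝ)) (hS : Module.finrank ℝ S = k) :
    Set.ncard {ε : Fin n → Bool | ∃ x ∈ S, ∀ i, if ε i then 0 < x i else x i < 0}
        ≤ 2 ^ k * Nat.choose n k ∧
      (Set.ncard {ε : Fin n → Bool | ∃ x ∈ S, ∀ i, if ε i then 0 < x i else x i < 0} : ℝ)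
        ≤ 2 ^ k * (Real.exp 1 * n / k) ^ k :=
  orthant_crossings_general n k hkn S hS
end
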